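/- For a,b ∈ ℕ₀ with a ≥ b and n ≥ 2, let h_{a,b}(ξ) = cos^{a+b}(ξ)·F(−b, −(a+1), 2(n−1), −tan²(ξ)). Then cos(ξ)·h_{a,b}(ξ) = ((2n−2+b)/(2n+a+b−1))·h_{a,b+1}(ξ) + ((a+1)/(2n+a+b−1))·h_{a−1,b}(ξ) and also cos(ξ)·h_{a,b}(ξ) = ((2n−1+a)/(2n+a+b−1))·h_{a+1,b}(ξ) + (b/(2n+a+b−1))·h_{a,b−1}(ξ). -/

import Mathlib

/-!
Since `-b` is a nonpositive integer, `F(-b, β, c, z)` is a polynomial in `z`, so the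
contiguous relation `(c-β-α)F(α,β) = (c-α)F(α-1,β) + β(z-1)F(α,β+1)` (for `α = -m`) can be
checked on Taylor coefficients, where it is a rational identity. The second recursion is the
same relation with the two numerator parameters of `F` exchanged. With `z = -tan²ξ` one has
`1 - z = cos⁻²ξ`, which absorbs the factor `z - 1` into the shift of the power of `cos ξ`
between `h_{a,b}` and `h_{a-1,b}` (resp. `h_{a,b-1}`).
-/

/-- The Gauss hypergeometric series `F(a,b,c,z) = ∑ (a)ₙ(b)ₙ/(c)ₙ · zⁿ/n!`,
where `(q)ₙ = q(q+1)⋯(q+n-1)` is the Pochhammer symbol. -/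
noncomputable def hypF (a b c z : ℝ) : ℝ :=
  ∑' n : ℕ,
    ((∏ i ∈ Finset.range n, (a + (i : ℝ))) * (∏ i ∈ Finset.range n, (b + (i : ℝ))) /
      (∏ i ∈ Finset.range n, (c + (i : ℝ)))) * z ^ n / (n.factorial : ℝ)


/-- The radial part of the `M`-spherical function of the `Sp(n)×Sp(1)`-type `V_{a,b}` on
`S^{4n-1}`: `h_{a,b}(ξ) = cos^{a+b}(ξ)·F(-b, -(a+1), 2(n-1), -tan²ξ)` (integer indices). -/
noncomputable def radialSp (n : ℕ) (a b : ℤ) (ξ : ℝ) : ℝ :=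
  Real.cos ξ ^ (a + b) *
    hypF (-(b : ℝ)) (-((a : ℝ) + 1)) (2 * ((n : ℝ) - 1)) (-(Real.tan ξ) ^ 2)

open Finset Real

noncomputable def hypTerm (a b c z : ℝ) (k : ℕ) : ℝ :=
  ((∏ i ∈ range k, (a + (i : ℝ))) * (∏ i ∈ range k, (b + (i : ℝ))) /
      (∏ i ∈ range k, (c + (i : ℝ)))) * z ^ k / (k.factorial : ℝ)

lemma hypF_comm (a b c z : ℝ) : hypF a b c z = hypF b a c z :=
  tsum_congr fun k => by ring

@[simp]
lemma hypTerm_zero (a b c z : ℝ) : hypTerm a b c z 0 = 1 := by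
  simp [hypTerm]

lemma hypTerm_eq_zero {a : ℝ} {i k : ℕ} (hik : i < k) (ha : a + i = 0) (b c z : ℝ) :
    hypTerm a b c z k = 0 := by
  have hP : ∏ j ∈ range k, (a + (j : ℝ)) = 0 := prod_eq_zero (mem_range.2 hik) ha
  simp [hypTerm, hP]

lemma hypF_eq_sum_range {a : ℝ} {i N : ℕ} (hiN : i < N) (ha : a + i = 0) (b c z : ℝ) :
    hypF a b c z = ∑ k ∈ range N, hypTerm a b c z k :=
  tsum_eq_sum fun k hk => hypTerm_eq_zero (by simp at hk; omega) ha b c z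

lemma prod_range_succ_add_cast (x : ℝ) (k : ℕ) :
    ∏ i ∈ range (k + 1), (x + i) = x * ∏ i ∈ range k, (x + 1 + i) := by
  rw [prod_range_succ', mul_comm]
  simp only [Nat.cast_succ, Nat.cast_zero, add_zero, add_assoc, add_comm (1 : ℝ)]

/- After clearing denominators this is
`(c-b-a)(a+k) - (c-a)(a-1) + (a+k)(b+1+k) = (k+1)(c+k)`, the ratio of consecutive
denominators `(c)ₖ k!`. -/
lemma hypTerm_contiguous (a b c z : ℝ) (hc : ∀ i : ℕ, c + i ≠ 0) (k : ℕ) :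
    (c - b - a) * hypTerm a b c z (k + 1) - (c - a) * hypTerm (a - 1) b c z (k + 1)
        + b * hypTerm a (b + 1) c z (k + 1) = b * z * hypTerm a (b + 1) c z k := by
  have hPc : ∏ i ∈ range k, (c + i) ≠ 0 := prod_ne_zero_iff.2 fun i _ => hc i
  have hck : c + k ≠ 0 := hc k
  unfold hypTerm
  rw [prod_range_succ_add_cast (a - 1), prod_range_succ_add_cast b, sub_add_cancel]
  simp only [prod_range_succ, Nat.factorial_succ]
  push_cast
  field_simp
  ring

theorem hypF_contiguous (m : ℕ) (b c z : ℝ) (hc : ∀ i : ℕ, c + i ≠ 0) :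
    (c - b + m) * hypF (-m) b c z
      = (c + m) * hypF (-m - 1) b c z + b * (z - 1) * hypF (-m) (b + 1) c z := by
  have hm : -(m : ℝ) + m = 0 := neg_add_cancel _
  have hm1 : -(m : ℝ) - 1 + (m + 1 : ℕ) = 0 := by push_cast; ring
  have key : ∑ k ∈ range (m + 2), ((c - b + m) * hypTerm (-m) b c z k
        - (c + m) * hypTerm (-m - 1) b c z k + b * hypTerm (-m) (b + 1) c z k)
      = b * z * ∑ k ∈ range (m + 1), hypTerm (-m) (b + 1) c z k := by
    rw [sum_range_succ', mul_sum]
    simp only [hypTerm_zero]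
    rw [show (c - b + m) * 1 - (c + m) * 1 + b * 1 = 0 by ring, add_zero]
    refine sum_congr rfl fun k _ => ?_
    simpa [sub_eq_add_neg] using hypTerm_contiguous (-m) b c z hc k
  simp only [sum_add_distrib, sum_sub_distrib, ← mul_sum] at key
  rw [← hypF_eq_sum_range (by omega) hm, ← hypF_eq_sum_range (by omega) hm1,
    ← hypF_eq_sum_range (by omega) hm, ← hypF_eq_sum_range (by omega) hm] at key
  linear_combination key

lemma cos_zpow_sub_one {ξ : ℝ} (hξ : cos ξ ≠ 0) (k : ℤ) :
    cos ξ ^ (k - 1) = (1 + tan ξ ^ 2) * cos ξ ^ (k + 1) := by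
  rw [show k + 1 = k - 1 + 2 by ring, zpow_add₀ hξ, zpow_ofNat]
  linear_combination -cos ξ ^ (k - 1) * one_add_tan_sq_mul_cos_sq_eq_one hξ

lemma two_mul_sub_one_add_cast_ne_zero {n : ℕ} (hn : 2 ≤ n) (i : ℕ) :
    2 * ((n : ℝ) - 1) + i ≠ 0 := by
  apply ne_of_gt
  have : (2 : ℝ) ≤ n := by exact_mod_cast hn
  have : (0 : ℝ) ≤ i := i.cast_nonneg
  linarith

theorem radialSp_contiguous_snd {n : ℕ} (hn : 2 ≤ n) (a : ℤ) (b : ℕ) {ξ : ℝ}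
    (hξ : cos ξ ≠ 0) :
    (2 * n + a + b - 1) * (cos ξ * radialSp n a b ξ)
      = (2 * n - 2 + b) * radialSp n a (b + 1) ξ + (a + 1) * radialSp n (a - 1) b ξ := by
  have h := hypF_contiguous b (-(a + 1)) (2 * ((n : ℝ) - 1)) (-tan ξ ^ 2)
    (two_mul_sub_one_add_cast_ne_zero hn)
  simp only [radialSp]
  rw [show a - 1 + b = a + b - 1 by ring, cos_zpow_sub_one hξ, ← add_assoc, zpow_add_one₀ hξ]
  push_cast
  rw [show -((b : ℝ) + 1) = -b - 1 by ring, show -((a : ℝ) - 1 + 1) = -(a + 1) + 1 by ring]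
  linear_combination cos ξ * cos ξ ^ (a + b) * h

theorem radialSp_contiguous_fst {n : ℕ} (hn : 2 ≤ n) (a : ℕ) (b : ℤ) {ξ : ℝ}
    (hξ : cos ξ ≠ 0) :
    (2 * n + a + b - 1) * (cos ξ * radialSp n a b ξ)
      = (2 * n - 1 + a) * radialSp n (a + 1) b ξ + b * radialSp n a (b - 1) ξ := by
  have h := hypF_contiguous (a + 1) (-b) (2 * ((n : ℝ) - 1)) (-tan ξ ^ 2)
    (two_mul_sub_one_add_cast_ne_zero hn)
  simp only [radialSp]
  rw [hypF_comm (-(b : ℝ)), hypF_comm (-(b : ℝ)), hypF_comm (-((b - 1 : ℤ) : ℝ)),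
    show a + (b - 1) = a + b - 1 by ring, cos_zpow_sub_one hξ,
    show (a : ℤ) + 1 + b = a + b + 1 by ring, zpow_add_one₀ hξ]
  push_cast at h ⊢
  rw [show -((b : ℝ) - 1) = -b + 1 by ring, show -((a : ℝ) + 1 + 1) = -(a + 1) - 1 by ring]
  linear_combination cos ξ * cos ξ ^ (a + b) * h

theorem radialSp_recursions_general (n : ℕ) (hn : 2 ≤ n) (a b : ℕ) (ξ : ℝ)
    (hξ : Real.cos ξ ≠ 0) :
    (Real.cos ξ * radialSp n a b ξ
        = ((2 * (n : ℝ) - 2 + b) / (2 * (n : ℝ) + a + b - 1)) * radialSp n a ((b : ℤ) + 1) ξ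
          + (((a : ℝ) + 1) / (2 * (n : ℝ) + a + b - 1)) * radialSp n ((a : ℤ) - 1) b ξ) ∧
      (Real.cos ξ * radialSp n a b ξ
        = ((2 * (n : ℝ) - 1 + a) / (2 * (n : ℝ) + a + b - 1)) * radialSp n ((a : ℤ) + 1) b ξ
          + ((b : ℝ) / (2 * (n : ℝ) + a + b - 1)) * radialSp n a ((b : ℤ) - 1) ξ) := by
  have hD : 2 * (n : ℝ) + a + b - 1 ≠ 0 := by
    convert two_mul_sub_one_add_cast_ne_zero hn (a + b + 1) using 1
    push_cast
    ring
  have hsnd := radialSp_contiguous_snd hn a b hξ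
  have hfst := radialSp_contiguous_fst hn a b hξ
  push_cast at hsnd hfst
  constructor
  · field_simp
    linear_combination hsnd
  · field_simp
    linear_combination hfst

/-- Contiguous recursions for the radial spherical functions of `Sp(n,1)`, `n ≥ 2`,
`a ≥ b ≥ 0`:
`cos ξ·h_{a,b} = ((2n-2+b)/(2n+a+b-1))·h_{a,b+1} + ((a+1)/(2n+a+b-1))·h_{a-1,b}` and
`cos ξ·h_{a,b} = ((2n-1+a)/(2n+a+b-1))·h_{a+1,b} + (b/(2n+a+b-1))·h_{a,b-1}`. -/
theorem radialSp_recursions (n : ℕ) (hn : 2 ≤ n) (a b : ℕ) (hab : b ≤ a) (ξ : ℝ)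
    (hξ : Real.cos ξ ≠ 0) :
    (Real.cos ξ * radialSp n a b ξ
        = ((2 * (n : ℝ) - 2 + b) / (2 * (n : ℝ) + a + b - 1)) * radialSp n a ((b : ℤ) + 1) ξ
          + (((a : ℝ) + 1) / (2 * (n : ℝ) + a + b - 1)) * radialSp n ((a : ℤ) - 1) b ξ) ∧
      (Real.cos ξ * radialSp n a b ξ
        = ((2 * (n : ℝ) - 1 + a) / (2 * (n : ℝ) + a + b - 1)) * radialSp n ((a : ℤ) + 1) b ξ
          + ((b : ℝ) / (2 * (n : ℝ) + a + b - 1)) * radialSp n a ((b : ℤ) - 1) ξ) :=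
  radialSp_recursions_general n hn a b ξ hξ
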